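/- If U and W are irreducible T-modules that are isomorphic as Q-modules, then they have the same diameter, and any Q-module isomorphism σ : U → W satisfies σ(E*_{r+i} U) = E*_{r'+i} W for 0 ≤ i ≤ d, where r, r' are the endpoints of U, W and d their common diameter. -/

import Mathlib

open Matrix BigOperators

noncomputable section

variable {X : Type*} [Fintype X] [DecidableEq X]

/-- The adjacency matrix of a graph, over ℂ. -/
def adjMat (G : SimpleGraph X) [DecidableRel G.Adj] : Matrix X X ℂ :=
  Matrix.of fun y z => if G.Adj y z then 1 else 0

/-- The dual idempotent `E*_i`: diagonal 0-1 matrix projecting onto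
vertices at distance `i` from `x` (zero for `i` outside the distance range). -/
def Estar (G : SimpleGraph X) (x : X) (i : ℤ) : Matrix X X ℂ :=
  Matrix.diagonal fun y => if (G.dist x y : ℤ) = i then 1 else 0

/-- The lowering matrix `L = Σ_{i=1}^D E*_{i-1} A E*_i`. -/
def lowerM (G : SimpleGraph X) [DecidableRel G.Adj] (x : X) (D : ℕ) : Matrix X X ℂ :=
  ∑ i ∈ Finset.Icc 1 D, Estar G x ((i : ℤ) - 1) * adjMat G * Estar G x i

/-- The flat matrix `F = Σ_{i=0}^D E*_i A E*_i`. -/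
def flatM (G : SimpleGraph X) [DecidableRel G.Adj] (x : X) (D : ℕ) : Matrix X X ℂ :=
  ∑ i ∈ Finset.range (D + 1), Estar G x i * adjMat G * Estar G x i

/-- The raising matrix `R = Σ_{i=0}^{D-1} E*_{i+1} A E*_i`. -/
def raiseM (G : SimpleGraph X) [DecidableRel G.Adj] (x : X) (D : ℕ) : Matrix X X ℂ :=
  ∑ i ∈ Finset.range D, Estar G x ((i : ℤ) + 1) * adjMat G * Estar G x i

/-- The subconstituent (Terwilliger) algebra `T`, generated by `A` and the `E*_i`. -/
def Talg (G : SimpleGraph X) [DecidableRel G.Adj] (x : X) (D : ℕ) :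
    Subalgebra ℂ (Matrix X X ℂ) :=
  Algebra.adjoin ℂ (insert (adjMat G) (Estar G x '' Set.Icc (0 : ℤ) (D : ℤ)))

/-- The quantum adjacency algebra `Q`, generated by `L, F, R`. -/
def Qalg (G : SimpleGraph X) [DecidableRel G.Adj] (x : X) (D : ℕ) :
    Subalgebra ℂ (Matrix X X ℂ) :=
  Algebra.adjoin ℂ {lowerM G x D, flatM G x D, raiseM G x D}

/-- The dual adjacency algebra `M*`, the span of the `E*_i`. -/
def Mstar (G : SimpleGraph X) (x : X) (D : ℕ) : Submodule ℂ (Matrix X X ℂ) :=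
  Submodule.span ℂ (Estar G x '' Set.Icc (0 : ℤ) (D : ℤ))

/-- The graded component `T_n = Σ_i E*_{i+n} T E*_i`. -/
def Tgraded (G : SimpleGraph X) [DecidableRel G.Adj] (x : X) (D : ℕ) (n : ℤ) :
    Submodule ℂ (Matrix X X ℂ) :=
  Submodule.span ℂ
    {M | ∃ i : ℤ, ∃ S ∈ Talg G x D, M = Estar G x (i + n) * S * Estar G x i}

/-- The graded component `Q_n = Q ∩ T_n`. -/
def Qgraded (G : SimpleGraph X) [DecidableRel G.Adj] (x : X) (D : ℕ) (n : ℤ) :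
    Submodule ℂ (Matrix X X ℂ) :=
  (Subalgebra.toSubmodule (Qalg G x D)) ⊓ Tgraded G x D n

/-- `W` is an irreducible module for the algebra `A₀ ⊆ Mat_X(ℂ)` (acting on `V = ℂ^X`
by matrix-vector multiplication). -/
def IsIrredMod (A₀ : Subalgebra ℂ (Matrix X X ℂ)) (W : Submodule ℂ (X → ℂ)) : Prop :=
  (∀ S ∈ A₀, ∀ w ∈ W, S.mulVec w ∈ W) ∧ W ≠ ⊥ ∧
    ∀ W' : Submodule ℂ (X → ℂ), W' ≤ W →
      (∀ S ∈ A₀, ∀ w ∈ W', S.mulVec w ∈ W') → W' = ⊥ ∨ W' = W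

/-- The subspace `E*_i W`. -/
def Emap (G : SimpleGraph X) (x : X) (i : ℤ) (W : Submodule ℂ (X → ℂ)) :
    Submodule ℂ (X → ℂ) :=
  W.map (Estar G x i).mulVecLin

/-- The subspace `P · W` spanned by all `S w`, `S ∈ P`, `w ∈ W`. -/
def actSp (P : Submodule ℂ (Matrix X X ℂ)) (W : Submodule ℂ (X → ℂ)) :
    Submodule ℂ (X → ℂ) :=
  Submodule.span ℂ {v | ∃ S ∈ P, ∃ w ∈ W, v = S.mulVec w}

/-- The statement: `W` has endpoint `r` and diameter `d`, i.e. `E*_i W ≠ 0`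
iff `r ≤ i ≤ r + d`. -/
def HasEndpointDiam (G : SimpleGraph X) (x : X) (W : Submodule ℂ (X → ℂ))
    (r d : ℕ) : Prop :=
  ∀ i : ℤ, Emap G x i W ≠ ⊥ ↔ ((r : ℤ) ≤ i ∧ i ≤ (r : ℤ) + (d : ℤ))

/-- `σ` restricts to an isomorphism of `Q`-modules from `U` to `W`. -/
def IsQIso (G : SimpleGraph X) [DecidableRel G.Adj] (x : X) (D : ℕ)
    (U W : Submodule ℂ (X → ℂ)) (σ : (X → ℂ) →ₗ[ℂ] (X → ℂ)) : Prop :=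
  U.map σ = W ∧ (∀ u ∈ U, σ u = 0 → u = 0) ∧
    ∀ S ∈ Qalg G x D, ∀ u ∈ U, σ (S.mulVec u) = S.mulVec (σ u)

/-- `σ` restricts to an isomorphism of `T`-modules from `U` to `W`. -/
def IsTIso (G : SimpleGraph X) [DecidableRel G.Adj] (x : X) (D : ℕ)
    (U W : Submodule ℂ (X → ℂ)) (σ : (X → ℂ) →ₗ[ℂ] (X → ℂ)) : Prop :=
  U.map σ = W ∧ (∀ u ∈ U, σ u = 0 → u = 0) ∧
    ∀ S ∈ Talg G x D, ∀ u ∈ U, σ (S.mulVec u) = S.mulVec (σ u)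

/-- `σ` restricts to a quasi-isomorphism of `T`-modules from `U` to `W`,
with endpoint shift `n`. -/
def IsQuasiIso (G : SimpleGraph X) [DecidableRel G.Adj] (x : X) (D : ℕ)
    (U W : Submodule ℂ (X → ℂ)) (σ : (X → ℂ) →ₗ[ℂ] (X → ℂ)) (n : ℤ) : Prop :=
  U.map σ = W ∧ (∀ u ∈ U, σ u = 0 → u = 0) ∧
    (∀ u ∈ U, σ ((lowerM G x D).mulVec u) = (lowerM G x D).mulVec (σ u)) ∧
    (∀ u ∈ U, σ ((flatM G x D).mulVec u) = (flatM G x D).mulVec (σ u)) ∧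
    (∀ u ∈ U, σ ((raiseM G x D).mulVec u) = (raiseM G x D).mulVec (σ u)) ∧
    ∀ i : ℤ, ∀ u ∈ U, σ ((Estar G x i).mulVec u) = (Estar G x (i + n)).mulVec (σ u)

end

/-!
`L`, `F`, `R` are homogeneous of degrees `-1, 0, 1` for the grading `E*_a M = M E*_(a-n)` of
`Mat_X(ℂ)`, so `Q` is the sum of its graded pieces `Q_n`, and `A = L + F + R` lies in `Q`.
Hence, inside an irreducible `T`-module `U` with endpoint `r`, the space `Q · E*_b S` (for any
`S ≤ U`) is `T`-invariant, so it is `0` or `U`. With `S = U`, `b = r` this gives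
`E*_(r+i) U = Q_i E*_r U`; with `S = ℂ u` it shows that `E*_r U` consists of the vectors of `U`
killed by every `Q_n` with `n < 0`. Both descriptions only involve the `Q`-action, so a
`Q`-isomorphism carries `E*_r U` onto `E*_r' W` and then `E*_(r+i) U` onto `E*_(r'+i) W`;
in particular the nonzero components correspond, and the diameters agree.
-/

section QuantumAdjacency

variable {X : Type*} (G : SimpleGraph X) (x : X)

section Action

variable [Fintype X]

lemma actSp_mono {P P' : Submodule ℂ (Matrix X X ℂ)} (h : P ≤ P')
    (W : Submodule ℂ (X → ℂ)) : actSp P W ≤ actSp P' W :=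
  Submodule.span_mono fun _ ⟨M, hM, w, hw, hv⟩ => ⟨M, h hM, w, hw, hv⟩

lemma mulVec_mem_actSp {P : Submodule ℂ (Matrix X X ℂ)} {W : Submodule ℂ (X → ℂ)}
    {S : Matrix X X ℂ} (hS : ∀ M ∈ P, S * M ∈ P) {v : X → ℂ} (hv : v ∈ actSp P W) :
    S *ᵥ v ∈ actSp P W := by
  refine (Submodule.span_le (p := (actSp P W).comap S.mulVecLin)).mpr ?_ hv
  rintro _ ⟨M, hM, w, hw, rfl⟩
  exact Submodule.subset_span ⟨S * M, hS M hM, w, hw, mulVec_mulVec w S M⟩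

variable [DecidableEq X]

lemma mulVec_mem_of_mem_adjoin {s : Set (Matrix X X ℂ)} {V : Submodule ℂ (X → ℂ)}
    (hs : ∀ S ∈ s, ∀ v ∈ V, S *ᵥ v ∈ V) {S : Matrix X X ℂ}
    (hS : S ∈ Algebra.adjoin ℂ s) : ∀ v ∈ V, S *ᵥ v ∈ V := by
  induction hS using Algebra.adjoin_induction with
  | mem S hS => exact hs S hS
  | algebraMap c =>
    intro v hv
    rw [Algebra.algebraMap_eq_smul_one, smul_mulVec, one_mulVec]
    exact V.smul_mem c hv
  | add S S' _ _ hS hS' =>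
    exact fun v hv => add_mulVec S S' v ▸ add_mem (hS v hv) (hS' v hv)
  | mul S S' _ _ hS hS' => exact fun v hv => mulVec_mulVec v S S' ▸ hS _ (hS' v hv)

end Action

variable [DecidableEq X]

section Estar

variable {D : ℕ}

lemma estar_eq_zero (hD : ∀ y, G.dist x y ≤ D) {a : ℤ} (ha : a < 0 ∨ (D : ℤ) < a) :
    Estar G x a = 0 := by
  rw [Estar, ← diagonal_zero]
  congr 1
  ext y
  have := hD y
  rw [if_neg (by omega)]

lemma sum_estar (hD : ∀ y, G.dist x y ≤ D) :
    ∑ a ∈ Finset.range (D + 1), Estar G x a = 1 := by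
  ext y z
  rw [Matrix.sum_apply]
  by_cases hyz : y = z
  · subst hyz
    simp only [Estar, diagonal_apply_eq, Nat.cast_inj, one_apply_eq]
    rw [Finset.sum_ite_eq, if_pos (Finset.mem_range.mpr (Nat.lt_succ_of_le (hD y)))]
  · simp [Estar, diagonal_apply_ne _ hyz, one_apply_ne hyz]

variable [Fintype X]

lemma estar_mulVec_apply (a : ℤ) (v : X → ℂ) (y : X) :
    (Estar G x a *ᵥ v) y = if (G.dist x y : ℤ) = a then v y else 0 := by
  simp [Estar, mulVec_diagonal]

lemma estar_mul_estar (a b : ℤ) :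
    Estar G x a * Estar G x b = if a = b then Estar G x a else 0 := by
  unfold Estar
  rw [diagonal_mul_diagonal]
  split_ifs with h
  · subst h
    congr 1
    ext y
    split_ifs <;> simp
  · rw [← diagonal_zero]
    congr 1
    ext y
    split_ifs <;> simp_all

lemma estar_mulVec_estar_mulVec (a b : ℤ) (v : X → ℂ) :
    Estar G x a *ᵥ (Estar G x b *ᵥ v) = if a = b then Estar G x b *ᵥ v else 0 := by
  rw [mulVec_mulVec, estar_mul_estar]
  split_ifs with h
  · rw [h]
  · rw [zero_mulVec]

lemma estar_mulVec_eq_self {a : ℤ} {v : X → ℂ} (h : ∀ b ≠ a, Estar G x b *ᵥ v = 0) :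
    Estar G x a *ᵥ v = v := by
  ext y
  rw [estar_mulVec_apply]
  split_ifs with hy
  · rfl
  · simpa [estar_mulVec_apply] using (congrFun (h _ hy) y).symm

end Estar

section Endpoint

variable [Fintype X] {G x} {U : Submodule ℂ (X → ℂ)} {r d : ℕ}

lemma HasEndpointDiam.emap_ne_bot (h : HasEndpointDiam G x U r d) : Emap G x r U ≠ ⊥ :=
  (h r).mpr ⟨le_rfl, by omega⟩

lemma HasEndpointDiam.emap_eq_bot_of_lt (h : HasEndpointDiam G x U r d) {a : ℤ} (ha : a < r) :
    Emap G x a U = ⊥ := by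
  by_contra hne
  have := (h a).mp hne
  omega

end Endpoint

section Graded

variable [Fintype X]

def matGraded (n : ℤ) : Submodule ℂ (Matrix X X ℂ) where
  carrier := {M | ∀ a, Estar G x a * M = M * Estar G x (a - n)}
  add_mem' hM hN a := by rw [mul_add, add_mul, hM, hN]
  zero_mem' a := by rw [mul_zero, zero_mul]
  smul_mem' c M hM a := by rw [mul_smul_comm, smul_mul_assoc, hM]

variable {G x} in
instance : SetLike.GradedMonoid (matGraded G x) where
  one_mem a := by rw [one_mul, mul_one, sub_zero]
  mul_mem n m M N hM hN a := by
    rw [← mul_assoc, hM, mul_assoc, hN, mul_assoc, sub_sub]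

lemma estar_mul_mul_estar_mem_matGraded (a b : ℤ) (S : Matrix X X ℂ) :
    Estar G x a * S * Estar G x b ∈ matGraded G x (a - b) := by
  intro c
  simp only [← mul_assoc, estar_mul_estar]
  simp only [mul_assoc, estar_mul_estar]
  by_cases h : c = a
  · rw [if_pos h, if_pos (by omega), h]
  · rw [if_neg h, if_neg (by omega)]
    simp

lemma mulVec_estar_mulVec {n : ℤ} {M : Matrix X X ℂ} (hM : M ∈ matGraded G x n) (a : ℤ)
    (v : X → ℂ) : M *ᵥ (Estar G x a *ᵥ v) = Estar G x (a + n) *ᵥ (M *ᵥ v) := by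
  rw [mulVec_mulVec, mulVec_mulVec, hM, add_sub_cancel_right]

end Graded

section LowerFlatRaise

variable [Fintype X] [DecidableRel G.Adj] (D : ℕ)

lemma lowerM_mem_matGraded : lowerM G x D ∈ matGraded G x (-1) :=
  Submodule.sum_mem _ fun i _ => by
    simpa using estar_mul_mul_estar_mem_matGraded G x ((i : ℤ) - 1) i (adjMat G)

lemma flatM_mem_matGraded : flatM G x D ∈ matGraded G x 0 :=
  Submodule.sum_mem _ fun i _ => by
    simpa using estar_mul_mul_estar_mem_matGraded G x i i (adjMat G)

lemma raiseM_mem_matGraded : raiseM G x D ∈ matGraded G x 1 :=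
  Submodule.sum_mem _ fun i _ => by
    simpa using estar_mul_mul_estar_mem_matGraded G x ((i : ℤ) + 1) i (adjMat G)

lemma sum_estar_mul_adjMat_mul_estar_apply (s : Finset ℕ) (f : ℕ → ℤ) (y z : X) :
    (∑ i ∈ s, Estar G x (f i) * adjMat G * Estar G x i) y z =
      if G.dist x z ∈ s ∧ (G.dist x y : ℤ) = f (G.dist x z) ∧ G.Adj y z then 1 else 0 := by
  simp only [Matrix.sum_apply, Estar, adjMat, diagonal_mul, mul_diagonal, of_apply, Nat.cast_inj,
    mul_ite, mul_one, mul_zero, Finset.sum_ite_eq]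
  split_ifs <;> simp_all

variable {D}

lemma adjMat_eq_lowerM_add_flatM_add_raiseM (hD : ∀ y, G.dist x y ≤ D) :
    adjMat G = lowerM G x D + flatM G x D + raiseM G x D := by
  ext y z
  rw [Matrix.add_apply, Matrix.add_apply, lowerM, flatM, raiseM,
    sum_estar_mul_adjMat_mul_estar_apply, sum_estar_mul_adjMat_mul_estar_apply,
    sum_estar_mul_adjMat_mul_estar_apply, adjMat, of_apply]
  have := hD y
  have := hD z
  by_cases hyz : G.Adj y z
  · have := hyz.diff_dist_adj (u := x)
    simp only [Finset.mem_Icc, Finset.mem_range, hyz, and_true, if_true]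
    split_ifs <;> first | omega | norm_num
  · simp [hyz]

end LowerFlatRaise

section Membership

variable [Fintype X] [DecidableRel G.Adj] {D : ℕ}

lemma estar_mem_talg (hD : ∀ y, G.dist x y ≤ D) (a : ℤ) : Estar G x a ∈ Talg G x D := by
  by_cases ha : 0 ≤ a ∧ a ≤ D
  · exact Algebra.subset_adjoin (Set.mem_insert_of_mem _ ⟨a, ha, rfl⟩)
  · rw [estar_eq_zero G x hD (by omega)]
    exact zero_mem _

lemma qalg_le_talg (hD : ∀ y, G.dist x y ≤ D) : Qalg G x D ≤ Talg G x D := by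
  have hA : adjMat G ∈ Talg G x D := Algebra.subset_adjoin (Set.mem_insert _ _)
  have hEAE : ∀ a b : ℤ, Estar G x a * adjMat G * Estar G x b ∈ Talg G x D := fun a b =>
    mul_mem (mul_mem (estar_mem_talg G x hD a) hA) (estar_mem_talg G x hD b)
  refine Algebra.adjoin_le ?_
  rintro _ (rfl | rfl | rfl) <;> exact sum_mem fun i _ => hEAE _ _

lemma adjMat_mem_qalg (hD : ∀ y, G.dist x y ≤ D) : adjMat G ∈ Qalg G x D := by
  rw [adjMat_eq_lowerM_add_flatM_add_raiseM G x hD]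
  exact add_mem (add_mem (Algebra.subset_adjoin (by simp)) (Algebra.subset_adjoin (by simp)))
    (Algebra.subset_adjoin (by simp))

end Membership

section GradedComponents

variable [Fintype X] [DecidableRel G.Adj] {D : ℕ}

lemma mem_tgraded_iff (hD : ∀ y, G.dist x y ≤ D) {n : ℤ} {M : Matrix X X ℂ} :
    M ∈ Tgraded G x D n ↔ M ∈ Talg G x D ∧ M ∈ matGraded G x n := by
  constructor
  · intro hM
    suffices Tgraded G x D n ≤ Subalgebra.toSubmodule (Talg G x D) ⊓ matGraded G x n from
      this hM
    refine Submodule.span_le.mpr ?_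
    rintro _ ⟨i, S, hS, rfl⟩
    refine ⟨(mul_mem (mul_mem (estar_mem_talg G x hD _) hS) (estar_mem_talg G x hD _) :), ?_⟩
    simpa using estar_mul_mul_estar_mem_matGraded G x (i + n) i S
  · rintro ⟨hT, hgr⟩
    have hsum : M = ∑ i ∈ Finset.range (D + 1), Estar G x (i + n) * M * Estar G x i := by
      conv_lhs => rw [← mul_one M, ← sum_estar G x hD, Finset.mul_sum]
      refine Finset.sum_congr rfl fun i _ => ?_
      rw [hgr, add_sub_cancel_right, mul_assoc, estar_mul_estar, if_pos rfl]
    rw [hsum]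
    exact Submodule.sum_mem _ fun i _ => Submodule.subset_span ⟨i, M, hT, rfl⟩

lemma mem_qgraded_iff (hD : ∀ y, G.dist x y ≤ D) {n : ℤ} {M : Matrix X X ℂ} :
    M ∈ Qgraded G x D n ↔ M ∈ Qalg G x D ∧ M ∈ matGraded G x n := by
  rw [Qgraded, Submodule.mem_inf, mem_tgraded_iff G x hD]
  exact ⟨fun ⟨hQ, _, hgr⟩ => ⟨hQ, hgr⟩,
    fun ⟨hQ, hgr⟩ => ⟨hQ, qalg_le_talg G x hD hQ, hgr⟩⟩

lemma qalg_le_iSup_qgraded (hD : ∀ y, G.dist x y ≤ D) :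
    Subalgebra.toSubmodule (Qalg G x D) ≤ ⨆ n, Qgraded G x D n := by
  rw [Qalg, Algebra.adjoin_eq_span, Submodule.span_le]
  intro M hM
  obtain ⟨n, hn⟩ : ∃ n, M ∈ Qgraded G x D n := by
    induction hM using Submonoid.closure_induction with
    | mem M hM =>
      have hQ : M ∈ Qalg G x D := Algebra.subset_adjoin hM
      rcases hM with rfl | rfl | rfl
      · exact ⟨-1, (mem_qgraded_iff G x hD).mpr ⟨hQ, lowerM_mem_matGraded G x D⟩⟩
      · exact ⟨0, (mem_qgraded_iff G x hD).mpr ⟨hQ, flatM_mem_matGraded G x D⟩⟩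
      · exact ⟨1, (mem_qgraded_iff G x hD).mpr ⟨hQ, raiseM_mem_matGraded G x D⟩⟩
    | one => exact ⟨0, (mem_qgraded_iff G x hD).mpr ⟨one_mem _, SetLike.one_mem_graded _⟩⟩
    | mul M N _ _ hM hN =>
      obtain ⟨n, hM⟩ := hM
      obtain ⟨m, hN⟩ := hN
      rw [mem_qgraded_iff G x hD] at hM hN
      exact ⟨n + m, (mem_qgraded_iff G x hD).mpr
        ⟨mul_mem hM.1 hN.1, SetLike.mul_mem_graded hM.2 hN.2⟩⟩
  exact Submodule.mem_iSup_of_mem n hn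

lemma exists_qgraded_estar_mul_mul_estar (hD : ∀ y, G.dist x y ≤ D) {M : Matrix X X ℂ}
    (hM : M ∈ Qalg G x D) (b c : ℤ) :
    ∃ M' ∈ Qgraded G x D (c - b), Estar G x c * M * Estar G x b = M' * Estar G x b := by
  refine Submodule.iSup_induction _ (qalg_le_iSup_qgraded G x hD hM)
    (motive := fun M => ∃ M' ∈ Qgraded G x D (c - b),
      Estar G x c * M * Estar G x b = M' * Estar G x b) ?_ ?_ ?_
  · intro n M hM
    rw [((mem_qgraded_iff G x hD).mp hM).2, mul_assoc, estar_mul_estar]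
    by_cases h : n = c - b
    · subst h
      exact ⟨M, hM, by rw [if_pos (by ring), sub_sub_cancel]⟩
    · exact ⟨0, zero_mem _, by rw [if_neg (by omega), mul_zero, zero_mul]⟩
  · exact ⟨0, zero_mem _, by rw [mul_zero, zero_mul]⟩
  · rintro M N ⟨M', hM', hM⟩ ⟨N', hN', hN⟩
    exact ⟨M' + N', add_mem hM' hN', by rw [mul_add, add_mul, hM, hN, add_mul]⟩

end GradedComponents

section Modules

variable [Fintype X] [DecidableRel G.Adj] {D : ℕ}

local notation "𝒬" => Subalgebra.toSubmodule (Qalg G x D)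

lemma emap_actSp_qalg_emap (hD : ∀ y, G.dist x y ≤ D) (W : Submodule ℂ (X → ℂ))
    (b c : ℤ) :
    Emap G x c (actSp 𝒬 (Emap G x b W)) = actSp (Qgraded G x D (c - b)) (Emap G x b W) := by
  rw [Emap, actSp, actSp, Submodule.map_span]
  congr 1
  ext v
  constructor
  · rintro ⟨_, ⟨M, hM, w, hw, rfl⟩, rfl⟩
    obtain ⟨u, -, rfl⟩ := Submodule.mem_map.mp hw
    obtain ⟨M', hM', h⟩ := exists_qgraded_estar_mul_mul_estar G x hD hM b c
    refine ⟨M', hM', _, hw, ?_⟩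
    simp only [mulVecLin_apply, mulVec_mulVec, ← mul_assoc, h]
  · rintro ⟨M', hM', w, hw, rfl⟩
    rw [mem_qgraded_iff G x hD] at hM'
    refine ⟨M' *ᵥ w, ⟨M', hM'.1, w, hw, rfl⟩, ?_⟩
    obtain ⟨u, -, rfl⟩ := Submodule.mem_map.mp hw
    simp only [mulVecLin_apply, mulVec_estar_mulVec G x hM'.2, add_sub_cancel,
      estar_mulVec_estar_mulVec, if_pos]

lemma mulVec_mem_actSp_qalg_emap (hD : ∀ y, G.dist x y ≤ D) {W : Submodule ℂ (X → ℂ)}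
    {b : ℤ} {S : Matrix X X ℂ} (hS : S ∈ Talg G x D) {v : X → ℂ}
    (hv : v ∈ actSp 𝒬 (Emap G x b W)) : S *ᵥ v ∈ actSp 𝒬 (Emap G x b W) := by
  refine mulVec_mem_of_mem_adjoin ?_ hS v hv
  rintro _ (rfl | ⟨a, -, rfl⟩) v hv
  · exact mulVec_mem_actSp (fun M hM => mul_mem (adjMat_mem_qalg G x hD) hM) hv
  · have hEv : Estar G x a *ᵥ v ∈ Emap G x a (actSp 𝒬 (Emap G x b W)) :=
      Submodule.mem_map_of_mem hv
    rw [emap_actSp_qalg_emap G x hD] at hEv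
    exact actSp_mono inf_le_left _ hEv

variable {G x}

lemma IsIrredMod.emap_le {U : Submodule ℂ (X → ℂ)} (hU : IsIrredMod (Talg G x D) U)
    (hD : ∀ y, G.dist x y ≤ D) (a : ℤ) : Emap G x a U ≤ U := by
  rintro _ ⟨u, hu, rfl⟩
  exact hU.1 _ (estar_mem_talg G x hD a) u hu

lemma IsIrredMod.actSp_qalg_emap_eq {U : Submodule ℂ (X → ℂ)}
    (hU : IsIrredMod (Talg G x D) U) (hD : ∀ y, G.dist x y ≤ D) {W : Submodule ℂ (X → ℂ)}
    (hWU : W ≤ U) {b : ℤ} (hne : Emap G x b W ≠ ⊥) : actSp 𝒬 (Emap G x b W) = U := by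
  have hle : actSp 𝒬 (Emap G x b W) ≤ U := by
    refine Submodule.span_le.mpr ?_
    rintro _ ⟨M, hM, _, ⟨u, hu, rfl⟩, rfl⟩
    exact hU.1 M (qalg_le_talg G x hD hM) _ (hU.emap_le hD b ⟨u, hWU hu, rfl⟩)
  have hsub : Emap G x b W ≤ actSp 𝒬 (Emap G x b W) := fun w hw =>
    Submodule.subset_span ⟨1, one_mem (Qalg G x D), w, hw, (one_mulVec w).symm⟩
  refine (hU.2.2 _ hle fun _ hS _ hv => mulVec_mem_actSp_qalg_emap G x hD hS hv).resolve_left ?_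
  exact fun hbot => hne (le_bot_iff.mp (hbot ▸ hsub))

variable {U : Submodule ℂ (X → ℂ)} {r d : ℕ}

lemma IsIrredMod.emap_endpoint_add (hU : IsIrredMod (Talg G x D) U)
    (hD : ∀ y, G.dist x y ≤ D) (hrU : HasEndpointDiam G x U r d) (i : ℤ) :
    Emap G x (r + i) U = actSp (Qgraded G x D i) (Emap G x r U) := by
  conv_lhs => rw [← hU.actSp_qalg_emap_eq hD le_rfl hrU.emap_ne_bot]
  rw [emap_actSp_qalg_emap G x hD, add_sub_cancel_left]

lemma IsIrredMod.mem_emap_endpoint_iff (hU : IsIrredMod (Talg G x D) U)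
    (hD : ∀ y, G.dist x y ≤ D) (hrU : HasEndpointDiam G x U r d) {u : X → ℂ} :
    u ∈ Emap G x r U ↔ u ∈ U ∧ ∀ n < 0, ∀ M ∈ Qgraded G x D n, M *ᵥ u = 0 := by
  constructor
  · rintro ⟨u, hu, rfl⟩
    refine ⟨hU.emap_le hD r ⟨u, hu, rfl⟩, fun n hn M hM => ?_⟩
    have hMu : M *ᵥ u ∈ U := hU.1 M (qalg_le_talg G x hD hM.1) u hu
    rw [mulVecLin_apply, mulVec_estar_mulVec G x ((mem_qgraded_iff G x hD).mp hM).2]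
    exact (Submodule.eq_bot_iff _).mp (hrU.emap_eq_bot_of_lt (by omega)) _ ⟨_, hMu, rfl⟩
  · rintro ⟨huU, hkill⟩
    suffices h : ∀ a ≠ (r : ℤ), Estar G x a *ᵥ u = 0 from
      estar_mulVec_eq_self G x h ▸ ⟨u, huU, rfl⟩
    intro a ha
    rcases lt_or_gt_of_ne ha with ha | ha
    · exact (Submodule.eq_bot_iff _).mp (hrU.emap_eq_bot_of_lt ha) _ ⟨u, huU, rfl⟩
    -- Otherwise `Q · E*_a u = U`, whose `E*_r`-part `Q_(r-a) E*_a u = E*_r Q_(r-a) u` vanishes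
    -- because `r - a < 0`.
    by_contra hne
    apply hrU.emap_ne_bot
    have hspan : Emap G x a (ℂ ∙ u) ≠ ⊥ := fun hbot =>
      hne ((Submodule.eq_bot_iff _).mp hbot _ ⟨u, Submodule.mem_span_singleton_self u, rfl⟩)
    rw [← hU.actSp_qalg_emap_eq hD ((Submodule.span_singleton_le_iff_mem u U).mpr huU) hspan,
      emap_actSp_qalg_emap G x hD, actSp, Submodule.span_eq_bot]
    rintro _ ⟨M, hM, _, ⟨_, hv, rfl⟩, rfl⟩
    obtain ⟨c, rfl⟩ := Submodule.mem_span_singleton.mp hv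
    rw [mulVecLin_apply, mulVec_estar_mulVec G x ((mem_qgraded_iff G x hD).mp hM).2, mulVec_smul,
      hkill _ (by omega) M hM, smul_zero, mulVec_zero]

end Modules

namespace IsQIso

variable [Fintype X] [DecidableRel G.Adj] {D : ℕ} {G x} {U W : Submodule ℂ (X → ℂ)}
  {σ : (X → ℂ) →ₗ[ℂ] (X → ℂ)}

lemma map_actSp (hσ : IsQIso G x D U W σ) {P : Submodule ℂ (Matrix X X ℂ)}
    (hP : P ≤ Subalgebra.toSubmodule (Qalg G x D)) {S : Submodule ℂ (X → ℂ)}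
    (hS : S ≤ U) : (actSp P S).map σ = actSp P (S.map σ) := by
  rw [actSp, actSp, Submodule.map_span]
  congr 1
  ext v
  constructor
  · rintro ⟨_, ⟨M, hM, w, hw, rfl⟩, rfl⟩
    exact ⟨M, hM, σ w, Submodule.mem_map_of_mem hw, hσ.2.2 M (hP hM) w (hS hw)⟩
  · rintro ⟨M, hM, _, ⟨w, hw, rfl⟩, rfl⟩
    exact ⟨M *ᵥ w, ⟨M, hM, w, hw, rfl⟩, hσ.2.2 M (hP hM) w (hS hw)⟩

lemma map_eq_bot_iff (hσ : IsQIso G x D U W σ) {S : Submodule ℂ (X → ℂ)} (hS : S ≤ U) :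
    S.map σ = ⊥ ↔ S = ⊥ := by
  refine ⟨fun h => (Submodule.eq_bot_iff _).mpr fun u hu => hσ.2.1 u (hS hu) ?_,
    fun h => h ▸ Submodule.map_bot σ⟩
  exact (Submodule.eq_bot_iff _).mp h _ (Submodule.mem_map_of_mem hu)

lemma map_emap_endpoint (hσ : IsQIso G x D U W σ) (hD : ∀ y, G.dist x y ≤ D)
    (hU : IsIrredMod (Talg G x D) U) (hW : IsIrredMod (Talg G x D) W) {r dU r' dW : ℕ}
    (hrU : HasEndpointDiam G x U r dU) (hrW : HasEndpointDiam G x W r' dW) :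
    (Emap G x r U).map σ = Emap G x r' W := by
  ext w
  rw [hW.mem_emap_endpoint_iff hD hrW]
  constructor
  · rintro ⟨u, hu, rfl⟩
    replace hu := (hU.mem_emap_endpoint_iff hD hrU).mp hu
    refine ⟨hσ.1 ▸ Submodule.mem_map_of_mem hu.1, fun n hn M hM => ?_⟩
    rw [← hσ.2.2 M hM.1 u hu.1, hu.2 n hn M hM, map_zero]
  · rintro ⟨hw, hkill⟩
    obtain ⟨u, hu, rfl⟩ := Submodule.mem_map.mp (hσ.1 ▸ hw)
    refine Submodule.mem_map_of_mem ((hU.mem_emap_endpoint_iff hD hrU).mpr ⟨hu, ?_⟩)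
    intro n hn M hM
    refine hσ.2.1 _ (hU.1 M (qalg_le_talg G x hD hM.1) u hu) ?_
    rw [hσ.2.2 M hM.1 u hu, hkill n hn M hM]

end IsQIso

end QuantumAdjacency

theorem stmt16_general {X : Type*} [Fintype X] [DecidableEq X]
    (G : SimpleGraph X) [DecidableRel G.Adj] (x : X) (D : ℕ)
    (hD : ∀ y, G.dist x y ≤ D)
    (U W : Submodule ℂ (X → ℂ))
    (hU : IsIrredMod (Talg G x D) U) (hW : IsIrredMod (Talg G x D) W)
    (r dU r' dW : ℕ)
    (hrU : HasEndpointDiam G x U r dU) (hrW : HasEndpointDiam G x W r' dW)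
    (σ : (X → ℂ) →ₗ[ℂ] (X → ℂ)) (hσ : IsQIso G x D U W σ) :
    dU = dW ∧
    ∀ i : ℕ, i ≤ dU →
      (Emap G x ((r : ℤ) + (i : ℤ)) U).map σ = Emap G x ((r' : ℤ) + (i : ℤ)) W := by
  have hcomp : ∀ i : ℤ, (Emap G x (r + i) U).map σ = Emap G x (r' + i) W := fun i => by
    rw [hU.emap_endpoint_add hD hrU, hW.emap_endpoint_add hD hrW,
      hσ.map_actSp (P := Qgraded G x D i) inf_le_left (hU.emap_le hD r),
      hσ.map_emap_endpoint hD hU hW hrU hrW]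
  have hne : ∀ i : ℤ, Emap G x (r + i) U ≠ ⊥ ↔ Emap G x (r' + i) W ≠ ⊥ := fun i => by
    rw [← hcomp, Ne, Ne, hσ.map_eq_bot_iff (hU.emap_le hD _)]
  have hdU := (hrW _).mp ((hne dU).mp ((hrU _).mpr ⟨by omega, le_rfl⟩))
  have hdW := (hrU _).mp ((hne dW).mpr ((hrW _).mpr ⟨by omega, le_rfl⟩))
  exact ⟨by omega, fun i _ => hcomp i⟩

theorem stmt16 {X : Type*} [Fintype X] [DecidableEq X]
    (G : SimpleGraph X) [DecidableRel G.Adj] (hG : G.Connected) (x : X) (D : ℕ)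
    (hD : ∀ y, G.dist x y ≤ D) (hD2 : ∃ y, G.dist x y = D)
    (U W : Submodule ℂ (X → ℂ))
    (hU : IsIrredMod (Talg G x D) U) (hW : IsIrredMod (Talg G x D) W)
    (r dU r' dW : ℕ)
    (hrU : HasEndpointDiam G x U r dU) (hrW : HasEndpointDiam G x W r' dW)
    (σ : (X → ℂ) →ₗ[ℂ] (X → ℂ)) (hσ : IsQIso G x D U W σ) :
    dU = dW ∧
    ∀ i : ℕ, i ≤ dU →
      (Emap G x ((r : ℤ) + (i : ℤ)) U).map σ = Emap G x ((r' : ℤ) + (i : ℤ)) W :=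
  stmt16_general G x D hD U W hU hW r dU r' dW hrU hrW σ hσ
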